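/- arXiv:0905.4341 — 5 statements merged into one kernel-verified Lean document; each statement's English description precedes it below -/
import Mathlib

section
/- If a probability measure ρ predicts a probability measure μ in total variation (i.e., sup_{A∈F} |ρ(A|x_{1..n}) − μ(A|x_{1..n})| → 0 μ-almost surely), then μ is absolutely continuous with respect to ρ. -/
open MeasureTheory Filter Set
open scoped ENNReal Topology

/-- The cylinder set `[x_{1..n}]` of all infinite sequences over `X` starting with the word `s`. -/
def cylSet {X : Type*} [MeasurableSpace X] {n : ℕ} (s : Fin n → X) : Set (ℕ → X) :=
  {ω | ∀ i : Fin n, ω (i : ℕ) = s i}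

/-- The probability `μ(x_{1..n})` of the word `s` (cylinder probability), as a real number. -/
noncomputable def cylP {X : Type*} [MeasurableSpace X] (μ : Measure (ℕ → X)) {n : ℕ}
    (s : Fin n → X) : ℝ :=
  (μ (cylSet s)).toReal

/-- Conditional probability `ρ(A | x_{1..n})` given the first `n` values of `ω`. -/
noncomputable def condProb {X : Type*} [MeasurableSpace X] (ρ : Measure (ℕ → X))
    (A : Set (ℕ → X)) (ω : ℕ → X) (n : ℕ) : ℝ :=
  (ρ (A ∩ {ω' | ∀ i < n, ω' i = ω i})).toReal / (ρ {ω' | ∀ i < n, ω' i = ω i}).toReal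

/-- Total variation distance `v(μ,ρ,x_{1..n})` between the conditional measures given `x_{1..n}`:
the supremum over measurable events of the difference of conditional probabilities. -/
noncomputable def tvDist {X : Type*} [MeasurableSpace X] (μ ρ : Measure (ℕ → X))
    (ω : ℕ → X) (n : ℕ) : ℝ :=
  ⨆ A : {A : Set (ℕ → X) // MeasurableSet A}, |condProb ρ A.1 ω n - condProb μ A.1 ω n|

/-- `ρ` predicts `μ` in total variation: `v(μ,ρ,x_{1..n}) → 0` with `μ`-probability 1. -/
def PredictsTV {X : Type*} [MeasurableSpace X] (ρ μ : Measure (ℕ → X)) : Prop :=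
  ∀ᵐ ω ∂μ, Tendsto (fun n => tvDist μ ρ ω n) atTop (𝓝 0)

/-! If `ρ A = 0`, every conditional probability `ρ(A | x_{1..n})` vanishes, so
`μ(A | x_{1..n}) ≤ v(μ, ρ, x_{1..n}) → 0` `μ`-almost surely. By the law of total probability,
`μ A` is the `μ`-mean of `μ(A | x_{1..n})` for every `n`, and dominated convergence gives `μ A = 0`. -/

open ProbabilityTheory

section LawOfTotalProbability

variable {Ω α : Type*} [MeasurableSpace Ω] [Fintype α] [MeasurableSpace α]
  [DiscreteMeasurableSpace α]

lemma integral_measureReal_cond_fiber {Y : Ω → α} (hY : Measurable Y) (μ : Measure Ω)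
    [IsFiniteMeasure μ] (A : Set Ω) :
    ∫ ω, (μ[|Y ← Y ω]).real A ∂μ = μ.real A := by
  calc ∫ ω, (μ[|Y ← Y ω]).real A ∂μ
    _ = ∫ y, (μ[|Y ← y]).real A ∂(μ.map Y) := by
      rw [integral_map hY.aemeasurable Measurable.of_discrete.aestronglyMeasurable]
    _ = ∑ y, μ.real (Y ⁻¹' {y}) * (μ[|Y ← y]).real A := by
      simp [integral_fintype .of_finite, map_measureReal_apply hY (.singleton _)]
    _ = (∑ y, μ (Y ⁻¹' {y}) • μ[|Y ← y]).real A := by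
      simp only [measureReal_def, Measure.coe_finsetSum, Measure.coe_smul, Finset.sum_apply,
        Pi.smul_apply, smul_eq_mul]
      rw [ENNReal.toReal_sum fun y _ => ENNReal.mul_ne_top (measure_ne_top _ _)
        (measure_ne_top _ _)]
      simp only [ENNReal.toReal_mul]
    _ = μ.real A := by rw [sum_meas_smul_cond_fiber hY]

end LawOfTotalProbability

section Sequences

variable {X : Type*} [MeasurableSpace X]

def prefixMap (n : ℕ) (ω : ℕ → X) : Fin n → X := fun i => ω i

lemma measurable_prefixMap (n : ℕ) : Measurable (prefixMap (X := X) n) :=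
  measurable_pi_lambda _ fun i => measurable_pi_apply (i : ℕ)

lemma condProb_nonneg (ρ : Measure (ℕ → X)) (A : Set (ℕ → X)) (ω : ℕ → X) (n : ℕ) :
    0 ≤ condProb ρ A ω n :=
  div_nonneg ENNReal.toReal_nonneg ENNReal.toReal_nonneg

lemma condProb_eq_zero_of_measure_eq_zero {ρ : Measure (ℕ → X)} {A : Set (ℕ → X)}
    (hA : ρ A = 0) (ω : ℕ → X) (n : ℕ) : condProb ρ A ω n = 0 := by
  simp [condProb, measure_mono_null inter_subset_left hA]

variable [MeasurableSingletonClass X]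

lemma condProb_eq_measureReal_cond (ρ : Measure (ℕ → X)) (A : Set (ℕ → X)) (ω : ℕ → X)
    (n : ℕ) : condProb ρ A ω n = (ρ[|prefixMap n ← prefixMap n ω]).real A := by
  -- on a null cylinder both sides vanish: `x / 0 = 0` on the left, `∞ * 0 = 0` on the right
  have hcyl : {ω' | ∀ i < n, ω' i = ω i} = prefixMap n ⁻¹' {prefixMap n ω} := by
    ext ω'
    simp [prefixMap, funext_iff, Fin.forall_iff]
  rw [condProb, hcyl, measureReal_def, cond_apply (measurable_prefixMap n (.singleton _)),
    ENNReal.toReal_mul, ENNReal.toReal_inv, div_eq_inv_mul, inter_comm]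

lemma condProb_le_one (ρ : Measure (ℕ → X)) (A : Set (ℕ → X)) (ω : ℕ → X) (n : ℕ) :
    condProb ρ A ω n ≤ 1 := by
  rw [condProb_eq_measureReal_cond]
  exact measureReal_le_one

lemma abs_condProb_sub_le_tvDist (μ ρ : Measure (ℕ → X)) {A : Set (ℕ → X)}
    (hA : MeasurableSet A) (ω : ℕ → X) (n : ℕ) :
    |condProb ρ A ω n - condProb μ A ω n| ≤ tvDist μ ρ ω n := by
  refine le_ciSup (f := fun B : {B : Set (ℕ → X) // MeasurableSet B} =>
    |condProb ρ B.1 ω n - condProb μ B.1 ω n|) ⟨1, ?_⟩ ⟨A, hA⟩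
  rintro x ⟨B, rfl⟩
  rw [abs_sub_le_iff]
  constructor
  · linarith [condProb_le_one ρ B.1 ω n, condProb_nonneg μ B.1 ω n]
  · linarith [condProb_le_one μ B.1 ω n, condProb_nonneg ρ B.1 ω n]

lemma PredictsTV.ae_tendsto_condProb_zero {ρ μ : Measure (ℕ → X)} (h : PredictsTV ρ μ)
    {A : Set (ℕ → X)} (hA : MeasurableSet A) (hρA : ρ A = 0) :
    ∀ᵐ ω ∂μ, Tendsto (fun n => condProb μ A ω n) atTop (𝓝 0) := by
  filter_upwards [h] with ω hω
  refine squeeze_zero (fun n => condProb_nonneg μ A ω n) (fun n => ?_) hω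
  simpa [condProb_eq_zero_of_measure_eq_zero hρA, abs_of_nonneg (condProb_nonneg μ A ω n)]
    using abs_condProb_sub_le_tvDist μ ρ hA ω n

variable [Fintype X]

lemma measurable_condProb (μ : Measure (ℕ → X)) (A : Set (ℕ → X)) (n : ℕ) :
    Measurable fun ω => condProb μ A ω n := by
  simp_rw [condProb_eq_measureReal_cond]
  exact (Measurable.of_discrete (f := fun s : Fin n → X => (μ[|prefixMap n ← s]).real A)).comp
    (measurable_prefixMap n)

lemma integral_condProb (μ : Measure (ℕ → X)) [IsFiniteMeasure μ] (A : Set (ℕ → X)) (n : ℕ) :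
    ∫ ω, condProb μ A ω n ∂μ = μ.real A := by
  simp_rw [condProb_eq_measureReal_cond]
  exact integral_measureReal_cond_fiber (measurable_prefixMap n) μ A

lemma measure_eq_zero_of_ae_tendsto_condProb_zero {μ : Measure (ℕ → X)} [IsFiniteMeasure μ]
    {A : Set (ℕ → X)} (h : ∀ᵐ ω ∂μ, Tendsto (fun n => condProb μ A ω n) atTop (𝓝 0)) :
    μ A = 0 := by
  have hlim : Tendsto (fun n => ∫ ω, condProb μ A ω n ∂μ) atTop (𝓝 (∫ _, (0 : ℝ) ∂μ)) :=
    tendsto_integral_of_dominated_convergence (fun _ => 1)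
      (fun n => (measurable_condProb μ A n).aestronglyMeasurable) (integrable_const 1)
      (fun n => .of_forall fun ω => by
        rw [Real.norm_of_nonneg (condProb_nonneg μ A ω n)]
        exact condProb_le_one μ A ω n)
      h
  simp_rw [integral_condProb, integral_zero] at hlim
  exact (measureReal_eq_zero_iff).1 (tendsto_nhds_unique tendsto_const_nhds hlim)

end Sequences

theorem predictsTV_implies_absolutelyContinuous_general {X : Type*} [Fintype X] [MeasurableSpace X]
    [MeasurableSingletonClass X] (μ ρ : Measure (ℕ → X))
    [IsProbabilityMeasure μ]
    (h : PredictsTV ρ μ) : μ ≪ ρ :=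
  .mk fun _ hA hρA =>
    measure_eq_zero_of_ae_tendsto_condProb_zero (h.ae_tendsto_condProb_zero hA hρA)

/-- If `ρ` predicts `μ` in total variation, then `μ` is absolutely continuous w.r.t. `ρ`. -/
theorem predictsTV_implies_absolutelyContinuous {X : Type*} [Fintype X] [MeasurableSpace X]
    [MeasurableSingletonClass X] (μ ρ : Measure (ℕ → X))
    [IsProbabilityMeasure μ] [IsProbabilityMeasure ρ]
    (h : PredictsTV ρ μ) : μ ≪ ρ :=
  predictsTV_implies_absolutelyContinuous_general μ ρ h
end

section
/- If μ is absolutely continuous with respect to ρ (measures on X^∞), then ρ predicts μ in total variation: sup_{A∈F} |ρ(A|x_{1..n}) − μ(A|x_{1..n})| → 0 μ-almost surely. -/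
/-!
Write `g = dμ/dρ` and `gₙ(ω) = μ(Cₙ(ω)) / ρ(Cₙ(ω))` for the cylinder `Cₙ(ω)` of the first `n`
letters of `ω`; then `gₙ = 𝔼_ρ[g | ℱₙ]` for the σ-algebra `ℱₙ` of the first `n` letters.
On `C = Cₙ(ω)` one has `ρ(A | C) - μ(A | C) = ∫_{A ∩ C} (gₙ - g) dρ / μ(C)`, so the total
variation distance at time `n` is at most `𝔼_ρ[|g - gₙ| | ℱₙ](ω) / gₙ(ω)`. Lévy's upward theorem
gives `gₙ → g`, and applied to `|g - gₘ|` for each fixed `m` it gives `𝔼_ρ[|g - gₙ| | ℱₙ] → 0`,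
`ρ`-a.s. and hence `μ`-a.s. Since `g > 0` `μ`-a.s., the bound tends to `0`.
-/

open MeasureTheory Filter Set
open scoped ENNReal Topology

-- The diagonal argument: `limsup a ≤ 2 |L - c m|` for every `m`.
theorem tendsto_zero_of_le_add_abs_sub {a c : ℕ → ℝ} {b : ℕ → ℕ → ℝ} {L : ℝ}
    (ha : ∀ n, 0 ≤ a n) (hc : Tendsto c atTop (𝓝 L))
    (hb : ∀ m, Tendsto (b m) atTop (𝓝 |L - c m|))
    (hab : ∀ m n, m ≤ n → a n ≤ b m n + |c m - c n|) : Tendsto a atTop (𝓝 0) := by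
  refine tendsto_order.2 ⟨fun ε hε => .of_forall fun n => hε.trans_le (ha n), fun ε hε => ?_⟩
  obtain ⟨m, hm⟩ := (hc.eventually (Metric.ball_mem_nhds L (by positivity : 0 < ε / 4))).exists
  rw [Real.dist_eq] at hm
  have hbm : ∀ᶠ n in atTop, b m n < ε / 2 :=
    (hb m).eventually_lt_const (by rw [abs_sub_comm]; linarith)
  have hcm : ∀ᶠ n in atTop, |c m - c n| < ε / 2 :=
    (tendsto_const_nhds.sub hc).abs.eventually_lt_const (by linarith)
  filter_upwards [hbm, hcm, eventually_ge_atTop m] with n hbn hcn hmn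
  linarith [hab m n hmn]

section Filtration

variable {Ω : Type*} {m₀ : MeasurableSpace Ω} {μ : Measure Ω} [IsFiniteMeasure μ]
  {ℱ : Filtration ℕ m₀} {g : Ω → ℝ}

theorem condExp_abs_sub_condExp_le (hg : Integrable g μ) {m n : ℕ} (hmn : m ≤ n) :
    μ[fun x => |g x - μ[g|ℱ n] x| | ℱ n] ≤ᵐ[μ]
      fun x => μ[fun y => |g y - μ[g|ℱ m] y| | ℱ n] x + |μ[g|ℱ m] x - μ[g|ℱ n] x| := by
  have hdev : ∀ k, Integrable (fun x => |g x - μ[g|ℱ k] x|) μ :=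
    fun k => (hg.sub integrable_condExp).abs
  have hjump : Integrable (fun x => |μ[g|ℱ m] x - μ[g|ℱ n] x|) μ :=
    (integrable_condExp.sub integrable_condExp).abs
  have hjump_meas : StronglyMeasurable[ℱ n] fun x => |μ[g|ℱ m] x - μ[g|ℱ n] x| :=
    continuous_abs.comp_stronglyMeasurable
      ((stronglyMeasurable_condExp.mono (ℱ.mono hmn)).sub stronglyMeasurable_condExp)
  have hmono := condExp_mono (m := ℱ n) (hdev n) ((hdev m).add hjump)
    (.of_forall fun x => abs_sub_le (g x) (μ[g|ℱ m] x) (μ[g|ℱ n] x))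
  filter_upwards [hmono, condExp_add (hdev m) hjump (ℱ n)] with x hx hadd
  rwa [hadd, Pi.add_apply, condExp_of_stronglyMeasurable (ℱ.le n) hjump_meas hjump] at hx

theorem ae_tendsto_condExp_abs_sub_condExp (hg : Integrable g μ)
    (hgm : StronglyMeasurable[⨆ n, ℱ n] g) :
    ∀ᵐ x ∂μ, Tendsto (fun n => μ[fun y => |g y - μ[g|ℱ n] y| | ℱ n] x) atTop (𝓝 0) := by
  have hlevy := hg.tendsto_ae_condExp hgm
  have hlevy_dev : ∀ᵐ x ∂μ, ∀ m, Tendsto (fun n => μ[fun y => |g y - μ[g|ℱ m] y| | ℱ n] x)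
      atTop (𝓝 |g x - μ[g|ℱ m] x|) :=
    ae_all_iff.2 fun m => (hg.sub integrable_condExp).abs.tendsto_ae_condExp
      (continuous_abs.comp_stronglyMeasurable
        (hgm.sub (stronglyMeasurable_condExp.mono (le_iSup ℱ m))))
  have hle : ∀ᵐ x ∂μ, ∀ m n, m ≤ n → μ[fun y => |g y - μ[g|ℱ n] y| | ℱ n] x ≤
      μ[fun y => |g y - μ[g|ℱ m] y| | ℱ n] x + |μ[g|ℱ m] x - μ[g|ℱ n] x| := by
    refine ae_all_iff.2 fun m => ae_all_iff.2 fun n => ?_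
    by_cases hmn : m ≤ n
    · filter_upwards [condExp_abs_sub_condExp_le hg hmn] with x hx using fun _ => hx
    · exact .of_forall fun x h => absurd h hmn
  have hnonneg : ∀ᵐ x ∂μ, ∀ n, 0 ≤ μ[fun y => |g y - μ[g|ℱ n] y| | ℱ n] x :=
    ae_all_iff.2 fun n => condExp_nonneg (.of_forall fun y => abs_nonneg _)
  filter_upwards [hlevy, hlevy_dev, hle, hnonneg] with x hc hb hab ha
  exact tendsto_zero_of_le_add_abs_sub ha hc hb hab

end Filtration

section Fiber

variable {Ω α : Type*} [MeasurableSpace Ω] [MeasurableSpace α] {f : Ω → α} {ρ : Measure Ω}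

noncomputable def fiberAverage (ρ : Measure Ω) (f : Ω → α) (φ : Ω → ℝ) (ω : Ω) : ℝ :=
  (∫ y in f ⁻¹' {f ω}, φ y ∂ρ) / ρ.real (f ⁻¹' {f ω})

theorem integrable_fiberAverage [Finite α] [MeasurableSingletonClass α] [IsFiniteMeasure ρ]
    (hf : Measurable f) (φ : Ω → ℝ) : Integrable (fiberAverage ρ f φ) ρ :=
  (integrable_map_measure
    (g := fun a => (∫ y in f ⁻¹' {a}, φ y ∂ρ) / ρ.real (f ⁻¹' {a}))
    Integrable.of_finite.aestronglyMeasurable hf.aemeasurable).1 Integrable.of_finite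

theorem stronglyMeasurable_fiberAverage [Finite α] [MeasurableSingletonClass α] (φ : Ω → ℝ) :
    StronglyMeasurable[MeasurableSpace.comap f ‹_›] (fiberAverage ρ f φ) :=
  ((measurable_of_finite fun a => (∫ y in f ⁻¹' {a}, φ y ∂ρ) / ρ.real (f ⁻¹' {a})).comp
    (comap_measurable f)).stronglyMeasurable

theorem setIntegral_fiberAverage_fiber [MeasurableSingletonClass α] [IsFiniteMeasure ρ]
    (hf : Measurable f) {φ : Ω → ℝ} (a : α) :
    ∫ x in f ⁻¹' {a}, fiberAverage ρ f φ x ∂ρ = ∫ x in f ⁻¹' {a}, φ x ∂ρ := by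
  have hconst : EqOn (fiberAverage ρ f φ)
      (fun _ => (∫ y in f ⁻¹' {a}, φ y ∂ρ) / ρ.real (f ⁻¹' {a})) (f ⁻¹' {a}) :=
    fun x hx => by rw [fiberAverage, hx]
  rw [setIntegral_congr_fun (hf (measurableSet_singleton a)) hconst, setIntegral_const,
    smul_eq_mul]
  rcases eq_or_ne (ρ.real (f ⁻¹' {a})) 0 with h0 | h0
  · rw [measureReal_eq_zero_iff] at h0
    simp [Measure.restrict_eq_zero.2 h0]
  · exact mul_div_cancel₀ _ h0

theorem condExp_comap_ae_eq_fiberAverage [Finite α] [MeasurableSingletonClass α]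
    [IsFiniteMeasure ρ] (hf : Measurable f) {φ : Ω → ℝ} (hφ : Integrable φ ρ) :
    ρ[φ | MeasurableSpace.comap f ‹_›] =ᵐ[ρ] fiberAverage ρ f φ := by
  classical
  refine (ae_eq_condExp_of_forall_setIntegral_eq hf.comap_le hφ
    (fun _ _ _ => (integrable_fiberAverage hf φ).integrableOn) (fun s hs _ => ?_)
    (stronglyMeasurable_fiberAverage φ).aestronglyMeasurable).symm
  obtain ⟨t, -, rfl⟩ := hs
  have hunion : f ⁻¹' t = ⋃ a ∈ t.toFinite.toFinset, f ⁻¹' {a} := by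
    simp only [Set.Finite.mem_toFinset, ← preimage_iUnion₂, biUnion_of_singleton]
  have hdisj :
      (t.toFinite.toFinset : Set α).Pairwise (Function.onFun Disjoint fun a => f ⁻¹' {a}) :=
    fun a _ b _ hab => (disjoint_singleton.2 hab).preimage f
  rw [hunion, integral_biUnion_finset _ (fun a _ => hf (measurableSet_singleton a)) hdisj
      fun a _ => (integrable_fiberAverage hf φ).integrableOn,
    integral_biUnion_finset _ (fun a _ => hf (measurableSet_singleton a)) hdisj
      fun a _ => hφ.integrableOn]
  exact Finset.sum_congr rfl fun a _ => setIntegral_fiberAverage_fiber hf a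

theorem ae_measure_fiber_ne_zero [Countable α] [MeasurableSingletonClass α] (hf : Measurable f) :
    ∀ᵐ ω ∂ρ, ρ (f ⁻¹' {f ω}) ≠ 0 :=
  ae_of_ae_map hf.aemeasurable (p := fun a => ρ (f ⁻¹' {a}) ≠ 0)
    (ae_iff_of_countable.2 fun a ha => by
      rwa [Measure.map_apply hf (measurableSet_singleton a)] at ha)

end Fiber

theorem abs_div_sub_div_le_setIntegral {Ω : Type*} [MeasurableSpace Ω] {μ ρ : Measure Ω}
    [IsFiniteMeasure μ] [IsFiniteMeasure ρ] (h : μ ≪ ρ) {A C : Set Ω} (hC : MeasurableSet C)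
    (hμC : μ C ≠ 0) {g : Ω → ℝ} (hg : ∀ x ∈ C, g x = μ.real C / ρ.real C) :
    |ρ.real (A ∩ C) / ρ.real C - μ.real (A ∩ C) / μ.real C| ≤
      (∫ x in C, |(μ.rnDeriv ρ x).toReal - g x| ∂ρ) / μ.real C := by
  set r := μ.real C / ρ.real C
  have hμpos : 0 < μ.real C := ENNReal.toReal_pos hμC (measure_ne_top μ C)
  have hρpos : 0 < ρ.real C :=
    ENNReal.toReal_pos (fun h0 => hμC (h h0)) (measure_ne_top ρ C)
  have hdiff : ρ.real (A ∩ C) / ρ.real C - μ.real (A ∩ C) / μ.real C =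
      (∫ x in A ∩ C, (r - (μ.rnDeriv ρ x).toReal) ∂ρ) / μ.real C := by
    rw [integral_sub (integrable_const r).integrableOn
        Measure.integrable_toReal_rnDeriv.integrableOn,
      setIntegral_const, Measure.setIntegral_toReal_rnDeriv h, smul_eq_mul]
    simp only [r]
    field_simp
  have hg' : ∫ x in C, |(μ.rnDeriv ρ x).toReal - g x| ∂ρ =
      ∫ x in C, |(μ.rnDeriv ρ x).toReal - r| ∂ρ :=
    setIntegral_congr_fun hC fun x hx => by rw [hg x hx]
  rw [hdiff, hg', abs_div, abs_of_pos hμpos]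
  gcongr
  calc |∫ x in A ∩ C, (r - (μ.rnDeriv ρ x).toReal) ∂ρ|
      ≤ ∫ x in A ∩ C, |(μ.rnDeriv ρ x).toReal - r| ∂ρ := by
        refine abs_integral_le_integral_abs.trans_eq ?_
        simp only [abs_sub_comm r]
    _ ≤ ∫ x in C, |(μ.rnDeriv ρ x).toReal - r| ∂ρ :=
        setIntegral_mono_set
          (Measure.integrable_toReal_rnDeriv.sub (integrable_const r)).abs.integrableOn
          (.of_forall fun x => abs_nonneg _) inter_subset_right.eventuallyLE

section Sequences

variable {X : Type*} [MeasurableSpace X]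

def seqPrefix (n : ℕ) (ω : ℕ → X) : Fin n → X := fun i => ω i

theorem measurable_seqPrefix (n : ℕ) : Measurable (seqPrefix (X := X) n) :=
  measurable_pi_lambda _ fun _ => measurable_pi_apply _

theorem seqPrefix_preimage_singleton {n : ℕ} (s : Fin n → X) :
    seqPrefix n ⁻¹' {s} = cylSet s := by
  ext ω
  simp [seqPrefix, cylSet, funext_iff]

theorem setOf_forall_lt_eq_cylSet (n : ℕ) (ω : ℕ → X) :
    {ω' : ℕ → X | ∀ i < n, ω' i = ω i} = cylSet (seqPrefix n ω) := by
  ext ω'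
  simp only [cylSet, seqPrefix]
  exact ⟨fun h i => h i i.2, fun h i hi => h ⟨i, hi⟩⟩

def prefixFiltration (X : Type*) [MeasurableSpace X] :
    Filtration ℕ (MeasurableSpace.pi : MeasurableSpace (ℕ → X)) where
  seq n := MeasurableSpace.comap (seqPrefix n) inferInstance
  mono' m n hmn := by
    have hfactor : seqPrefix (X := X) m = (fun w i => w (Fin.castLE hmn i)) ∘ seqPrefix n := rfl
    simp only [hfactor, ← MeasurableSpace.comap_comp]
    exact MeasurableSpace.comap_mono
      (measurable_pi_lambda _ fun _ => measurable_pi_apply _).comap_le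
  le' n := (measurable_seqPrefix n).comap_le

theorem iSup_prefixFiltration :
    ⨆ n, (prefixFiltration X n : MeasurableSpace (ℕ → X)) = MeasurableSpace.pi := by
  refine le_antisymm (iSup_le (prefixFiltration X).le) <| iSup_le fun i => ?_
  have hcoord : (fun ω : ℕ → X => ω i) = (fun w => w (Fin.last i)) ∘ seqPrefix (i + 1) := rfl
  rw [hcoord, ← MeasurableSpace.comap_comp]
  exact (MeasurableSpace.comap_mono (measurable_pi_apply _).comap_le).trans
    (le_iSup (fun n => (prefixFiltration X n : MeasurableSpace (ℕ → X))) (i + 1))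

theorem Measurable.stronglyMeasurable_iSup_prefixFiltration {φ : (ℕ → X) → ℝ}
    (hφ : Measurable φ) : StronglyMeasurable[⨆ n, prefixFiltration X n] φ := by
  rw [iSup_prefixFiltration]
  exact hφ.stronglyMeasurable

theorem tvDist_nonneg (μ ρ : Measure (ℕ → X)) (ω : ℕ → X) (n : ℕ) : 0 ≤ tvDist μ ρ ω n :=
  Real.iSup_nonneg fun _ => abs_nonneg _

end Sequences

section CylinderRatio

variable {X : Type*} [MeasurableSpace X] {μ ρ : Measure (ℕ → X)}

noncomputable def cylRatio (μ ρ : Measure (ℕ → X)) (n : ℕ) (ω : ℕ → X) : ℝ :=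
  cylP μ (seqPrefix n ω) / cylP ρ (seqPrefix n ω)

theorem cylRatio_eq_of_mem_cylSet {n : ℕ} {x ω : ℕ → X} (hx : x ∈ cylSet (seqPrefix n ω)) :
    cylRatio μ ρ n x = μ.real (cylSet (seqPrefix n ω)) / ρ.real (cylSet (seqPrefix n ω)) := by
  rw [← seqPrefix_preimage_singleton] at hx
  rw [cylRatio, show seqPrefix n x = seqPrefix n ω from hx]
  rfl

theorem fiberAverage_rnDeriv_eq_cylRatio [IsFiniteMeasure μ] [IsFiniteMeasure ρ] (h : μ ≪ ρ)
    (n : ℕ) :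
    fiberAverage ρ (seqPrefix n) (fun x => (μ.rnDeriv ρ x).toReal) = cylRatio μ ρ n := by
  funext ω
  rw [fiberAverage, Measure.setIntegral_toReal_rnDeriv h, seqPrefix_preimage_singleton]
  rfl

theorem condExp_rnDeriv_ae_eq_cylRatio [Finite X] [MeasurableSingletonClass X]
    [IsFiniteMeasure μ] [IsFiniteMeasure ρ] (h : μ ≪ ρ) (n : ℕ) :
    ρ[fun x => (μ.rnDeriv ρ x).toReal | prefixFiltration X n] =ᵐ[ρ] cylRatio μ ρ n :=
  fiberAverage_rnDeriv_eq_cylRatio h n ▸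
    condExp_comap_ae_eq_fiberAverage (measurable_seqPrefix n) Measure.integrable_toReal_rnDeriv

theorem ae_tendsto_cylRatio [Finite X] [MeasurableSingletonClass X]
    [IsFiniteMeasure μ] [IsFiniteMeasure ρ] (h : μ ≪ ρ) :
    ∀ᵐ ω ∂ρ, Tendsto (cylRatio μ ρ · ω) atTop (𝓝 (μ.rnDeriv ρ ω).toReal) := by
  filter_upwards [Measure.integrable_toReal_rnDeriv.tendsto_ae_condExp
      (Measure.measurable_rnDeriv μ ρ).ennreal_toReal.stronglyMeasurable_iSup_prefixFiltration,
    ae_all_iff.2 (condExp_rnDeriv_ae_eq_cylRatio h)] with ω hlim heq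
  simpa only [heq] using hlim

theorem ae_tendsto_fiberAverage_abs_rnDeriv_sub_cylRatio [Finite X] [MeasurableSingletonClass X]
    [IsFiniteMeasure μ] [IsFiniteMeasure ρ] (h : μ ≪ ρ) :
    ∀ᵐ ω ∂ρ, Tendsto (fun n => fiberAverage ρ (seqPrefix n)
      (fun x => |(μ.rnDeriv ρ x).toReal - cylRatio μ ρ n x|) ω) atTop (𝓝 0) := by
  have hcongr (n : ℕ) : ρ[fun x => |(μ.rnDeriv ρ x).toReal -
        ρ[fun y => (μ.rnDeriv ρ y).toReal | prefixFiltration X n] x| | prefixFiltration X n]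
      =ᵐ[ρ] fiberAverage ρ (seqPrefix n)
        (fun x => |(μ.rnDeriv ρ x).toReal - cylRatio μ ρ n x|) := by
    refine (condExp_congr_ae ?_).trans (condExp_comap_ae_eq_fiberAverage
      (measurable_seqPrefix n) (Measure.integrable_toReal_rnDeriv.sub
        (fiberAverage_rnDeriv_eq_cylRatio h n ▸
          integrable_fiberAverage (measurable_seqPrefix n) _)).abs)
    filter_upwards [condExp_rnDeriv_ae_eq_cylRatio h n] with x hx
    rw [hx]
  filter_upwards [ae_tendsto_condExp_abs_sub_condExp Measure.integrable_toReal_rnDeriv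
      (Measure.measurable_rnDeriv μ ρ).ennreal_toReal.stronglyMeasurable_iSup_prefixFiltration,
    ae_all_iff.2 hcongr] with ω hlim heq
  simpa only [heq] using hlim

theorem tvDist_le_fiberAverage_div_cylRatio [Finite X] [MeasurableSingletonClass X]
    [IsFiniteMeasure μ] [IsFiniteMeasure ρ] (h : μ ≪ ρ) {ω : ℕ → X} {n : ℕ}
    (hω : μ (cylSet (seqPrefix n ω)) ≠ 0) :
    tvDist μ ρ ω n ≤ fiberAverage ρ (seqPrefix n)
      (fun x => |(μ.rnDeriv ρ x).toReal - cylRatio μ ρ n x|) ω / cylRatio μ ρ n ω := by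
  have hC : MeasurableSet (cylSet (seqPrefix n ω)) := by
    rw [← seqPrefix_preimage_singleton]
    exact measurable_seqPrefix n (measurableSet_singleton _)
  set C := cylSet (seqPrefix n ω)
  have hρC : ρ.real C ≠ 0 :=
    (ENNReal.toReal_pos (fun h0 => hω (h h0)) (measure_ne_top ρ C)).ne'
  have hbound : fiberAverage ρ (seqPrefix n)
      (fun x => |(μ.rnDeriv ρ x).toReal - cylRatio μ ρ n x|) ω / cylRatio μ ρ n ω =
      (∫ x in C, |(μ.rnDeriv ρ x).toReal - cylRatio μ ρ n x| ∂ρ) / μ.real C := by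
    rw [fiberAverage, cylRatio, seqPrefix_preimage_singleton]
    exact div_div_div_cancel_right₀ hρC _ _
  rw [hbound]
  refine Real.iSup_le (fun A => ?_) (div_nonneg (integral_nonneg fun _ => abs_nonneg _)
    measureReal_nonneg)
  rw [condProb, condProb, setOf_forall_lt_eq_cylSet]
  exact abs_div_sub_div_le_setIntegral h hC hω fun x hx => cylRatio_eq_of_mem_cylSet hx

end CylinderRatio

/-- Blackwell–Dubins: if `μ ≪ ρ`, then `ρ` predicts `μ` in total variation. -/
theorem absolutelyContinuous_implies_predictsTV {X : Type*} [Fintype X] [MeasurableSpace X]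
    [MeasurableSingletonClass X] (μ ρ : Measure (ℕ → X))
    [IsProbabilityMeasure μ] [IsProbabilityMeasure ρ]
    (h : μ ≪ ρ) : PredictsTV ρ μ := by
  have hcyl : ∀ᵐ ω ∂μ, ∀ n, μ (cylSet (seqPrefix n ω)) ≠ 0 := ae_all_iff.2 fun n => by
    simpa only [seqPrefix_preimage_singleton] using
      ae_measure_fiber_ne_zero (ρ := μ) (measurable_seqPrefix n)
  have hpos : ∀ᵐ ω ∂μ, 0 < (μ.rnDeriv ρ ω).toReal := by
    filter_upwards [Measure.rnDeriv_pos h, h.ae_le (Measure.rnDeriv_lt_top μ ρ)] with ω hp hl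
    exact ENNReal.toReal_pos hp.ne' hl.ne
  filter_upwards [hcyl, hpos, h.ae_le (ae_tendsto_cylRatio h),
    h.ae_le (ae_tendsto_fiberAverage_abs_rnDeriv_sub_cylRatio h)] with ω hω hg_pos hratio hdev
  refine squeeze_zero (fun n => tvDist_nonneg μ ρ ω n)
    (fun n => tvDist_le_fiberAverage_div_cylRatio h (hω n)) ?_
  rw [← zero_div (μ.rnDeriv ρ ω).toReal]
  exact hdev.div hratio hg_pos.ne'
end

section
/- Let C be a set of probability measures on X^∞. If there exists a measure ρ such that every μ ∈ C is absolutely continuous with respect to ρ, then there exists a sequence (μ_k)_{k∈ℕ} of elements of C such that for any positive weights w_k summing to 1, every μ ∈ C is absolutely continuous with respect to ν := Σ_k w_k μ_k. -/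
open MeasureTheory Filter Set
open scoped ENNReal Topology

/-!
Every `μ ∈ C` has a density `dμ/dρ` in `L¹(ρ)`, and `|μ(A) - μ'(A)| ≤ ‖dμ/dρ - dμ'/dρ‖₁` for every
set `A`. Since `X^∞` is standard Borel, `L¹(ρ)` is separable, so the densities of some sequence
`μ_k ∈ C` are dense among those of `C`. If `ν(A) = 0` then every `μ_k(A) = 0`, and approximating the
density of `μ` by those of the `μ_k` gives `μ(A) = 0`.
-/

open TopologicalSpace

theorem TopologicalSpace.IsSeparable.exists_seq_forall_mem_closure_range_comp {β X : Type*}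
    [TopologicalSpace X] [PseudoMetrizableSpace X] {f : β → X} {C : Set β} (hne : C.Nonempty)
    (hsep : IsSeparable (f '' C)) :
    ∃ b : ℕ → β, (∀ n, b n ∈ C) ∧ ∀ c ∈ C, f c ∈ closure (range (f ∘ b)) := by
  obtain ⟨T, hTC, hTc, hCT⟩ := hsep.exists_countable_dense_subset
  obtain ⟨c₀, hc₀⟩ := hne
  have hTne : T.Nonempty := closure_nonempty_iff.1 ⟨_, hCT (mem_image_of_mem f hc₀)⟩
  obtain ⟨t, rfl⟩ := hTc.exists_eq_range hTne
  choose b hbC hbt using fun n => hTC (mem_range_self n)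
  refine ⟨b, hbC, fun c hc => ?_⟩
  have hrange : range (f ∘ b) = range t := congrArg range (funext hbt)
  exact hrange ▸ hCT (mem_image_of_mem f hc)

namespace MeasureTheory.Measure

variable {α : Type*} [MeasurableSpace α]

open Classical in
noncomputable def rnDerivL1 (μ ρ : Measure α) : α →₁[ρ] ℝ :=
  if h : Integrable (fun x => (μ.rnDeriv ρ x).toReal) ρ then h.toL1 _ else 0

theorem rnDerivL1_ae_eq (μ ρ : Measure α) [IsFiniteMeasure μ] :
    rnDerivL1 μ ρ =ᵐ[ρ] fun x => (μ.rnDeriv ρ x).toReal := by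
  rw [rnDerivL1, dif_pos integrable_toReal_rnDeriv]
  exact Integrable.coeFn_toL1 _

theorem setIntegral_rnDerivL1 {μ ρ : Measure α} [IsFiniteMeasure μ] [SigmaFinite ρ]
    (hμρ : μ ≪ ρ) (A : Set α) : ∫ x in A, rnDerivL1 μ ρ x ∂ρ = μ.real A := by
  rw [integral_congr_ae (ae_restrict_of_ae (rnDerivL1_ae_eq μ ρ))]
  exact setIntegral_toReal_rnDeriv hμρ A

theorem abs_measureReal_sub_le_dist_rnDerivL1 {μ ν ρ : Measure α} [IsFiniteMeasure μ]
    [IsFiniteMeasure ν] [SigmaFinite ρ] (hμρ : μ ≪ ρ) (hνρ : ν ≪ ρ) (A : Set α) :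
    |μ.real A - ν.real A| ≤ dist (rnDerivL1 μ ρ) (rnDerivL1 ν ρ) := by
  set f := rnDerivL1 μ ρ
  set g := rnDerivL1 ν ρ
  calc |μ.real A - ν.real A|
      = ‖∫ x in A, (f x - g x) ∂ρ‖ := by
        rw [integral_sub (L1.integrable_coeFn f).integrableOn (L1.integrable_coeFn g).integrableOn,
          setIntegral_rnDerivL1 hμρ, setIntegral_rnDerivL1 hνρ, Real.norm_eq_abs]
    _ ≤ ∫ x in A, dist (f x) (g x) ∂ρ := by
        simp only [dist_eq_norm]
        exact norm_integral_le_integral_norm _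
    _ ≤ ∫ x, dist (f x) (g x) ∂ρ :=
        setIntegral_le_integral ((L1.integrable_coeFn f).sub (L1.integrable_coeFn g)).norm
          (Eventually.of_forall fun _ => dist_nonneg)
    _ = dist f g := (L1.dist_eq_integral_dist f g).symm

theorem exists_seq_absolutelyContinuous_sum {ρ : Measure α} [SigmaFinite ρ]
    [SeparableSpace (α →₁[ρ] ℝ)] {C : Set (Measure α)} (hne : C.Nonempty)
    (hfin : ∀ μ ∈ C, IsFiniteMeasure μ) (hdom : ∀ μ ∈ C, μ ≪ ρ) :
    ∃ μk : ℕ → Measure α, (∀ k, μk k ∈ C) ∧ ∀ μ ∈ C, μ ≪ sum μk := by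
  obtain ⟨μk, hμkC, hdense⟩ :=
    (IsSeparable.of_separableSpace _).exists_seq_forall_mem_closure_range_comp
      (f := fun μ => rnDerivL1 μ ρ) hne
  refine ⟨μk, hμkC, fun μ hμ => AbsolutelyContinuous.mk fun A hA hA0 => ?_⟩
  have := hfin μ hμ
  have hμk0 : ∀ k, μk k A = 0 := (sum_apply_eq_zero' hA).1 hA0
  suffices μ.real A ≤ 0 from
    (measureReal_eq_zero_iff (measure_ne_top μ A)).1 (le_antisymm this measureReal_nonneg)
  refine le_of_forall_pos_lt_add fun ε hε => ?_
  obtain ⟨k, hk⟩ := Metric.mem_closure_range_iff.1 (hdense μ hμ) ε hε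
  have := hfin _ (hμkC k)
  calc μ.real A = |μ.real A - (μk k).real A| := by
        rw [measureReal_def (μk k), hμk0, ENNReal.toReal_zero, sub_zero,
          abs_of_nonneg measureReal_nonneg]
    _ ≤ dist (rnDerivL1 μ ρ) (rnDerivL1 (μk k) ρ) :=
        abs_measureReal_sub_le_dist_rnDerivL1 (hdom μ hμ) (hdom _ (hμkC k)) A
    _ < 0 + ε := by rwa [zero_add]

end MeasureTheory.Measure

/-- Theorem 1 (via Blackwell–Dubins equivalence): if every `μ` in a nonempty class `C` of
probability measures on `X^∞` is absolutely continuous w.r.t. some `ρ`, then there is a sequence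
`μ_k ∈ C` such that for any positive weights summing to 1, every `μ ∈ C` is absolutely
continuous w.r.t. the mixture `ν = Σ_k w_k μ_k`. -/
theorem countable_mixture_dominates {X : Type*} [Fintype X] [MeasurableSpace X]
    [MeasurableSingletonClass X] (C : Set (Measure (ℕ → X))) (hne : C.Nonempty)
    (hC : ∀ μ ∈ C, IsProbabilityMeasure μ)
    (ρ : Measure (ℕ → X)) [IsProbabilityMeasure ρ] (hdom : ∀ μ ∈ C, μ ≪ ρ) :
    ∃ μk : ℕ → Measure (ℕ → X), (∀ k, μk k ∈ C) ∧
      ∀ w : ℕ → ℝ≥0∞, (∀ k, 0 < w k) → (∑' k, w k) = 1 →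
        ∀ μ ∈ C, μ ≪ Measure.sum (fun k => w k • μk k) := by
  -- needed by the separability instance `Lp.SecondCountableTopology`; it is not a global instance
  have : Fact ((1 : ℝ≥0∞) ≠ ∞) := ⟨ENNReal.one_ne_top⟩
  obtain ⟨μk, hμkC, hsum⟩ := Measure.exists_seq_absolutelyContinuous_sum hne
    (fun μ hμ => have := hC μ hμ; inferInstance) hdom
  refine ⟨μk, hμkC, fun w hw _ μ hμ => (hsum μ hμ).trans ?_⟩
  exact Measure.absolutelyContinuous_sum_left fun k =>
    Measure.absolutelyContinuous_sum_right k (Measure.absolutelyContinuous_smul (hw k).ne')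
end

section
/- Let μ, ρ be probability measures on X^∞, let T_μ^n := { x_{1..n} : μ(x_{1..n}) ≥ (1/n)ρ(x_{1..n}) }, and let S ⊆ X^n be any set with ρ(T_μ^n \ S) ≤ ε for some ε ∈ (0,1). Then μ(T_μ^n \ S) ≤ ( d_n(μ,ρ) + log n + 1 + log|X| ) / ( −log ε ), where d_n(μ,ρ) is the KL divergence between the restrictions of μ and ρ to X^n. -/
open MeasureTheory Filter Set
open scoped ENNReal Topology

open scoped Classical in
/-- The `n`-step Kullback-Leibler divergence `d_n(μ,ρ)` between the restrictions of `μ` and `ρ`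
to the first `n` observations, with the convention that terms with `μ(x_{1..n}) = 0` vanish. -/
noncomputable def klDn {X : Type*} [Fintype X] [MeasurableSpace X]
    (μ ρ : Measure (ℕ → X)) (n : ℕ) : ℝ :=
  ∑ s : Fin n → X, if cylP μ s = 0 then 0 else cylP μ s * Real.log (cylP μ s / cylP ρ s)

namespace Real

lemma neg_exp_neg_one_le_mul_log {x : ℝ} (hx : 0 ≤ x) : -exp (-1) ≤ x * log x := by
  rcases hx.eq_or_lt with rfl | hx
  · simp [(exp_pos _).le]
  have key := one_sub_inv_le_log_of_pos (mul_pos hx (exp_pos 1))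
  rw [log_mul hx.ne' (exp_pos 1).ne', log_exp, mul_inv, ← exp_neg, inv_mul_eq_div] at key
  have key : -exp (-1) / x ≤ log x := by rw [neg_div]; linarith
  rw [div_le_iff₀ hx] at key
  linarith

/-- Pointwise form of Gibbs' inequality, from `1 - t⁻¹ ≤ log t` at `t = p / (q c)`. -/
lemma mul_log_add_sub_le_mul_log_div {p q c : ℝ} (hp : 0 ≤ p) (hq : 0 ≤ q)
    (hqp : q = 0 → p = 0) (hc : 0 < c) : p * log c + p - q * c ≤ p * log (p / q) := by
  rcases hp.eq_or_lt with rfl | hp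
  · simpa using mul_nonneg hq hc.le
  have hq : 0 < q := hq.lt_of_ne fun h => hp.ne' (hqp h.symm)
  have key := one_sub_inv_le_log_of_pos (by positivity : 0 < p / (q * c))
  rw [← div_div, log_div (by positivity) hc.ne', inv_div] at key
  have hpq : p * (1 - c / (p / q)) = p - q * c := by field_simp
  nlinarith [mul_le_mul_of_nonneg_left key hp.le]

/-- The log-sum inequality, with the total mass of `q` replaced by any upper bound `r`. -/
lemma sum_mul_log_div_le_sum_mul_log_div {ι : Type*} {A : Finset ι} {p q : ι → ℝ}
    {r : ℝ} (hp : ∀ i ∈ A, 0 ≤ p i) (hq : ∀ i ∈ A, 0 ≤ q i)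
    (hqp : ∀ i ∈ A, q i = 0 → p i = 0) (hr : ∑ i ∈ A, q i ≤ r) :
    (∑ i ∈ A, p i) * log ((∑ i ∈ A, p i) / r) ≤ ∑ i ∈ A, p i * log (p i / q i) := by
  set P := ∑ i ∈ A, p i
  have hP : 0 ≤ P := Finset.sum_nonneg hp
  rcases hP.eq_or_lt with hP | hP
  · have hzero : ∀ i ∈ A, p i = 0 := (Finset.sum_eq_zero_iff_of_nonneg hp).mp hP.symm
    rw [← hP, zero_mul, Finset.sum_eq_zero fun i hi => by rw [hzero i hi, zero_mul]]
  have hQ : 0 < ∑ i ∈ A, q i := by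
    refine (Finset.sum_nonneg hq).lt_of_ne fun hQ => hP.ne' (Finset.sum_eq_zero fun i hi => ?_)
    exact hqp i hi ((Finset.sum_eq_zero_iff_of_nonneg hq).mp hQ.symm i hi)
  have hr0 : 0 < r := hQ.trans_le hr
  have hgibbs := Finset.sum_le_sum fun i hi =>
    mul_log_add_sub_le_mul_log_div (hp i hi) (hq i hi) (hqp i hi) (div_pos hP hr0)
  rw [Finset.sum_sub_distrib, Finset.sum_add_distrib, ← Finset.sum_mul, ← Finset.sum_mul]
    at hgibbs
  have hmass : (∑ i ∈ A, q i) * (P / r) ≤ P := calc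
    _ ≤ r * (P / r) := mul_le_mul_of_nonneg_right hr (by positivity)
    _ = P := mul_div_cancel₀ P hr0.ne'
  linarith

end Real

open Real

section Cylinders

variable {X : Type*} [MeasurableSpace X]

lemma cylSet_eq_preimage {n : ℕ} (s : Fin n → X) :
    cylSet s = (fun (ω : ℕ → X) (i : Fin n) => ω i) ⁻¹' {s} := by
  ext ω
  simp [cylSet, funext_iff]

lemma cylP_nonneg (μ : Measure (ℕ → X)) {n : ℕ} (s : Fin n → X) : 0 ≤ cylP μ s :=
  ENNReal.toReal_nonneg

lemma sum_cylP_le_one [MeasurableSingletonClass X] (μ : Measure (ℕ → X))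
    [IsZeroOrProbabilityMeasure μ] {n : ℕ} (A : Finset (Fin n → X)) :
    ∑ s ∈ A, cylP μ s ≤ 1 := by
  simp only [cylP, cylSet_eq_preimage, ← measureReal_def]
  rw [sum_measureReal_preimage_singleton A fun s _ =>
    (measurable_pi_lambda _ fun i => measurable_pi_apply _) (measurableSet_singleton s)]
  exact measureReal_le_one

/-- The part of `d_n(μ, ρ)` coming from the words in `A`; no case split as in `klDn` is needed,
since `0 * log _ = 0`. -/
noncomputable def klDnOn (μ ρ : Measure (ℕ → X)) {n : ℕ} (A : Finset (Fin n → X)) : ℝ :=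
  ∑ s ∈ A, cylP μ s * log (cylP μ s / cylP ρ s)

lemma klDn_eq_klDnOn_univ [Fintype X] (μ ρ : Measure (ℕ → X)) (n : ℕ) :
    klDn μ ρ n = klDnOn μ ρ (Finset.univ : Finset (Fin n → X)) := by
  refine Finset.sum_congr rfl fun s _ => ?_
  split_ifs with h
  · rw [h, zero_mul]
  · rfl

variable {μ ρ : Measure (ℕ → X)} {n : ℕ}
  (hac : ∀ s : Fin n → X, cylP ρ s = 0 → cylP μ s = 0)
include hac

lemma mul_log_div_le_klDnOn {A : Finset (Fin n → X)} {r : ℝ}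
    (hr : ∑ s ∈ A, cylP ρ s ≤ r) :
    (∑ s ∈ A, cylP μ s) * log ((∑ s ∈ A, cylP μ s) / r) ≤ klDnOn μ ρ A :=
  sum_mul_log_div_le_sum_mul_log_div (fun s _ => cylP_nonneg μ s) (fun s _ => cylP_nonneg ρ s)
    (fun s _ => hac s) hr

lemma mul_neg_log_sub_half_le_klDnOn {A : Finset (Fin n → X)} {ε : ℝ} (hε : 0 < ε)
    (hA : ∑ s ∈ A, cylP ρ s ≤ ε) :
    (∑ s ∈ A, cylP μ s) * -log ε - 1 / 2 ≤ klDnOn μ ρ A := by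
  set P := ∑ s ∈ A, cylP μ s
  have h : P * log (P / ε) ≤ klDnOn μ ρ A := mul_log_div_le_klDnOn hac hA
  have hP : 0 ≤ P := Finset.sum_nonneg fun s _ => cylP_nonneg μ s
  rcases hP.eq_or_lt with hP0 | hP
  · rw [← hP0, zero_mul] at h ⊢
    linarith
  rw [log_div hP.ne' hε.ne'] at h
  linarith [neg_exp_neg_one_le_mul_log hP.le, exp_neg_one_lt_half]

variable [MeasurableSingletonClass X]

lemma neg_half_le_klDnOn [IsProbabilityMeasure ρ] (A : Finset (Fin n → X)) :
    -(1 / 2) ≤ klDnOn μ ρ A := by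
  have h := mul_log_div_le_klDnOn hac (sum_cylP_le_one ρ A)
  have hP : 0 ≤ ∑ s ∈ A, cylP μ s := Finset.sum_nonneg fun s _ => cylP_nonneg μ s
  rw [div_one] at h
  linarith [neg_exp_neg_one_le_mul_log hP, exp_neg_one_lt_half]

lemma neg_log_le_klDnOn [IsZeroOrProbabilityMeasure μ] {A : Finset (Fin n → X)} {c : ℝ}
    (hc : 1 ≤ c) (hA : ∀ s ∈ A, cylP ρ s ≤ c * cylP μ s) :
    -log c ≤ klDnOn μ ρ A := by
  set P := ∑ s ∈ A, cylP μ s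
  have h : P * log (P / (c * P)) ≤ klDnOn μ ρ A := mul_log_div_le_klDnOn hac
    (by rw [Finset.mul_sum]; exact Finset.sum_le_sum hA)
  have hlogc : 0 ≤ log c := log_nonneg hc
  have hP : 0 ≤ P := Finset.sum_nonneg fun s _ => cylP_nonneg μ s
  rcases hP.eq_or_lt with hP | hP
  · rw [← hP, zero_mul] at h
    linarith
  rw [div_mul_cancel_right₀ hP.ne', log_inv] at h
  nlinarith [sum_cylP_le_one μ A]

end Cylinders

open scoped Classical in
/-- Bound (11): if `ρ(T_μ^n \ S) ≤ ε` for `ε ∈ (0,1)`, then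
`μ(T_μ^n \ S) ≤ (d_n(μ,ρ) + log n + 1 + log|X|)/(−log ε)`. -/
theorem mu_T_minus_S_bound {X : Type*} [Fintype X] [MeasurableSpace X]
    [MeasurableSingletonClass X] (μ ρ : Measure (ℕ → X))
    [IsProbabilityMeasure μ] [IsProbabilityMeasure ρ] (n : ℕ) (hn : 1 ≤ n)
    (hac : ∀ s : Fin n → X, cylP ρ s = 0 → cylP μ s = 0)
    (S : Finset (Fin n → X)) (ε : ℝ) (hε : ε ∈ Set.Ioo (0 : ℝ) 1)
    (hρS : ∑ s ∈ (Finset.univ.filter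
        (fun s : Fin n → X => (1 / (n : ℝ)) * cylP ρ s ≤ cylP μ s)) \ S, cylP ρ s ≤ ε) :
    ∑ s ∈ (Finset.univ.filter
        (fun s : Fin n → X => (1 / (n : ℝ)) * cylP ρ s ≤ cylP μ s)) \ S, cylP μ s
      ≤ (klDn μ ρ n + Real.log n + 1 + Real.log (Fintype.card X)) / (-Real.log ε) := by
  obtain ⟨hε0, hε1⟩ := hε
  set T := Finset.univ.filter fun s : Fin n → X => (1 / (n : ℝ)) * cylP ρ s ≤ cylP μ s
  have hsplit : klDn μ ρ n =
      klDnOn μ ρ (T ∩ S) + klDnOn μ ρ (T \ S) + klDnOn μ ρ (Finset.univ \ T) := by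
    rw [klDn_eq_klDnOn_univ, klDnOn, ← Finset.sum_sdiff (Finset.subset_univ T),
      ← Finset.sum_inter_add_sum_sdiff T S]
    simp only [klDnOn]
    ring
  have hTS : -log n ≤ klDnOn μ ρ (T ∩ S) := by
    refine neg_log_le_klDnOn hac (by exact_mod_cast hn) fun s hs => ?_
    have hsT := (Finset.mem_filter.mp (Finset.mem_inter.mp hs).1).2
    rwa [one_div, inv_mul_le_iff₀ (by exact_mod_cast hn)] at hsT
  have hTmS := mul_neg_log_sub_half_le_klDnOn hac hε0 hρS
  have hTc := neg_half_le_klDnOn hac (Finset.univ \ T)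
  have hX : 0 ≤ log (Fintype.card X) := log_natCast_nonneg _
  rw [le_div_iff₀ (neg_pos.mpr (log_neg hε0 hε1))]
  linarith
end

section
/- Let γ' := Σ_{n∈ℕ} w_n γ'_n where w_n = (6/π²)n^{−2} and γ'_n := (1/|A_n|) Σ_{x_{1..n}∈A_n} μ_{x_{1..n}}, with A_n := { x_{1..n} ∈ X^n : ∃μ∈C, μ(x_{1..n}) ≠ 0 } and μ_{x_{1..n}} ∈ C a measure maximizing μ(x_{1..n}) over μ ∈ C. Then for every μ ∈ C, every n, and every x_{1..n} with μ(x_{1..n}) > 0: γ'(x_{1..n}) ≥ w_n |X|^{−n} μ(x_{1..n}). -/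
open MeasureTheory Filter Set
open scoped ENNReal Topology

/-! The `n`-th component of `γ` gives mass at least `w_n |A_n|⁻¹ μ_s(s) ≥ w_n |X|⁻ⁿ μ(s)` to the
cylinder of `s`, because `s ∈ A_n`, `|A_n| ≤ |X|ⁿ` and `μ_s` maximizes the cylinder probability
over `C`. Since `∑ w_n < ∞` and each component is a sub-probability measure, `γ` is finite, so the
bound survives the passage to real numbers. -/

section Mixture

variable {α : Type*} [MeasurableSpace α]

theorem inv_card_mul_le_avg_apply {ι : Type*} {t : Finset ι} {ν : ι → Measure α} {i : ι}
    (hi : i ∈ t) (S : Set α) :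
    (t.card : ℝ≥0∞)⁻¹ * ν i S ≤ ((t.card : ℝ≥0∞)⁻¹ • ∑ j ∈ t, ν j) S := by
  rw [Measure.smul_apply, smul_eq_mul, Measure.coe_finsetSum, Finset.sum_apply]
  gcongr
  exact Finset.single_le_sum (f := fun j => ν j S) (fun _ _ => zero_le) hi

theorem avg_apply_univ_le_one {ι : Type*} {t : Finset ι} {ν : ι → Measure α}
    (hν : ∀ i ∈ t, IsProbabilityMeasure (ν i)) :
    ((t.card : ℝ≥0∞)⁻¹ • ∑ j ∈ t, ν j) univ ≤ 1 := by
  rw [Measure.smul_apply, smul_eq_mul, Measure.coe_finsetSum, Finset.sum_apply,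
    Finset.sum_congr rfl fun i hi => (hν i hi).measure_univ]
  simp [ENNReal.inv_mul_le_one]

theorem isFiniteMeasure_sum_ofReal_smul {ν : ℕ → Measure α} (hν : ∀ k, ν k univ ≤ 1)
    {w : ℕ → ℝ} (hw0 : ∀ k, 0 ≤ w k) (hw : Summable w) :
    IsFiniteMeasure (Measure.sum fun k => ENNReal.ofReal (w k) • ν k) := by
  refine ⟨lt_of_le_of_lt ?_ (ENNReal.ofReal_lt_top (r := ∑' k, w k))⟩
  rw [Measure.sum_apply _ MeasurableSet.univ, ENNReal.ofReal_tsum_of_nonneg hw0 hw]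
  refine ENNReal.tsum_le_tsum fun k => ?_
  simpa using mul_le_mul_right (hν k) (ENNReal.ofReal (w k))

theorem le_sum_smul_avg_apply {ι : ℕ → Type*} {ν : (k : ℕ) → ι k → Measure α}
    {t : (k : ℕ) → Finset (ι k)} (w : ℕ → ℝ≥0∞) {n : ℕ} {i : ι n} (hi : i ∈ t n) (S : Set α) :
    w n * ((t n).card : ℝ≥0∞)⁻¹ * ν n i S ≤
      Measure.sum (fun k => w k • (((t k).card : ℝ≥0∞)⁻¹ • ∑ j ∈ t k, ν k j)) S :=
  calc w n * ((t n).card : ℝ≥0∞)⁻¹ * ν n i S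
      ≤ w n * (((t n).card : ℝ≥0∞)⁻¹ • ∑ j ∈ t n, ν n j) S := by
        rw [mul_assoc]; exact mul_le_mul_right (inv_card_mul_le_avg_apply hi S) _
    _ ≤ _ := Measure.le_sum (fun k => w k • (((t k).card : ℝ≥0∞)⁻¹ • ∑ j ∈ t k, ν k j)) n S

end Mixture

theorem regularizer_lower_bound_general {X : Type*} [Fintype X] [MeasurableSpace X]
    (C : Set (Measure (ℕ → X)))
    (hC : ∀ μ ∈ C, IsProbabilityMeasure μ)
    (m : (n : ℕ) → (Fin n → X) → Measure (ℕ → X))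
    (hm : ∀ (n : ℕ) (s : Fin n → X), m n s ∈ C)
    (hmax : ∀ (n : ℕ) (s : Fin n → X), ∀ μ ∈ C, cylP μ s ≤ cylP (m n s) s)
    (A : (n : ℕ) → Finset (Fin n → X))
    (hA : ∀ (n : ℕ) (s : Fin n → X), s ∈ A n ↔ ∃ μ ∈ C, cylP μ s ≠ 0)
    (γ : Measure (ℕ → X))
    (hγ : γ = Measure.sum fun n : ℕ =>
      ENNReal.ofReal (6 / Real.pi ^ 2 * ((n : ℝ) ^ 2)⁻¹) •
        (((A n).card : ℝ≥0∞)⁻¹ • ∑ s ∈ A n, m n s)) :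
    ∀ μ ∈ C, ∀ (n : ℕ) (s : Fin n → X), 0 < cylP μ s →
      6 / Real.pi ^ 2 * ((n : ℝ) ^ 2)⁻¹ * ((Fintype.card X : ℝ) ^ n)⁻¹ * cylP μ s
        ≤ cylP γ s := by
  intro μ hμ n s hs
  have := hC μ hμ
  have := hC _ (hm n s)
  -- needed because `cylP γ s` is the junk value `0` when `γ (cylSet s) = ∞`
  have hγfin : IsFiniteMeasure γ := hγ ▸ isFiniteMeasure_sum_ofReal_smul
    (fun k => avg_apply_univ_le_one fun t _ => hC _ (hm k t)) (fun _ => by positivity)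
    ((Real.summable_nat_pow_inv.mpr one_lt_two).mul_left _)
  have hsA : s ∈ A n := (hA n s).mpr ⟨μ, hμ, hs.ne'⟩
  have hμm : μ (cylSet s) ≤ m n s (cylSet s) :=
    (ENNReal.toReal_le_toReal (measure_ne_top _ _) (measure_ne_top _ _)).mp (hmax n s μ hμ)
  have hcard : ((Fintype.card X ^ n : ℕ) : ℝ≥0∞)⁻¹ ≤ ((A n).card : ℝ≥0∞)⁻¹ :=
    ENNReal.inv_le_inv.mpr (by exact_mod_cast (A n).card_le_univ.trans_eq (by simp))
  have key : ENNReal.ofReal (6 / Real.pi ^ 2 * ((n : ℝ) ^ 2)⁻¹) *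
      ((Fintype.card X ^ n : ℕ) : ℝ≥0∞)⁻¹ * μ (cylSet s) ≤ γ (cylSet s) := by
    rw [hγ]
    refine le_trans ?_ (le_sum_smul_avg_apply _ hsA _)
    gcongr
  calc 6 / Real.pi ^ 2 * ((n : ℝ) ^ 2)⁻¹ * ((Fintype.card X : ℝ) ^ n)⁻¹ * cylP μ s
      = (ENNReal.ofReal (6 / Real.pi ^ 2 * ((n : ℝ) ^ 2)⁻¹) *
          ((Fintype.card X ^ n : ℕ) : ℝ≥0∞)⁻¹ * μ (cylSet s)).toReal := by
        simp [cylP, ENNReal.toReal_mul, ENNReal.toReal_inv, ENNReal.toReal_ofReal,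
          show (0 : ℝ) ≤ 6 / Real.pi ^ 2 * ((n : ℝ) ^ 2)⁻¹ by positivity]
    _ ≤ cylP γ s := ENNReal.toReal_mono (measure_ne_top _ _) key

/-- Step r of the proof of Theorem 2: the regularizer `γ' = Σ_n w_n γ'_n`, where
`w_n = (6/π²)n⁻²` and `γ'_n` is the uniform average over `A_n` of the maximizers
`μ_{x_{1..n}}`, satisfies `γ'(x_{1..n}) ≥ w_n |X|^{−n} μ(x_{1..n})` for every `μ ∈ C`
and every word with positive `μ`-probability. -/
theorem regularizer_lower_bound {X : Type*} [Fintype X] [MeasurableSpace X]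
    [MeasurableSingletonClass X] (C : Set (Measure (ℕ → X)))
    (hC : ∀ μ ∈ C, IsProbabilityMeasure μ)
    (m : (n : ℕ) → (Fin n → X) → Measure (ℕ → X))
    (hm : ∀ (n : ℕ) (s : Fin n → X), m n s ∈ C)
    (hmax : ∀ (n : ℕ) (s : Fin n → X), ∀ μ ∈ C, cylP μ s ≤ cylP (m n s) s)
    (A : (n : ℕ) → Finset (Fin n → X))
    (hA : ∀ (n : ℕ) (s : Fin n → X), s ∈ A n ↔ ∃ μ ∈ C, cylP μ s ≠ 0)
    (γ : Measure (ℕ → X))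
    (hγ : γ = Measure.sum fun n : ℕ =>
      ENNReal.ofReal (6 / Real.pi ^ 2 * ((n : ℝ) ^ 2)⁻¹) •
        (((A n).card : ℝ≥0∞)⁻¹ • ∑ s ∈ A n, m n s)) :
    ∀ μ ∈ C, ∀ (n : ℕ) (s : Fin n → X), 0 < cylP μ s →
      6 / Real.pi ^ 2 * ((n : ℝ) ^ 2)⁻¹ * ((Fintype.card X : ℝ) ^ n)⁻¹ * cylP μ s
        ≤ cylP γ s :=
  regularizer_lower_bound_general C hC m hm hmax A hA γ hγ
end
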